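/- Let n ≥ 2, k ≥ 1, R ∈ (-1,1), and let ψ be a solution on (-1,r₀) of ψ'(r) = -(1/(k(1-r²)))(ψ(r)²+1)(√(1-r²)ψ(r)² - (n-1)(r-R)ψ(r) + √(1-r²)) with r₀ ∈ (-1,a) and η₁(r₀) < ψ(r₀) < η₂(r₀), where a is the smaller root of B(r) = ((n-1)²+4)r² - 2(n-1)²Rr + (n-1)²R² - 4. Then ψ(r) → -∞ as r ↓ -1. -/

import Mathlib

/-!
Along the solution put `g(r) = Aq n R (ψ r) r`, so that `ψ' = (ψ² + 1) (-g) / (k (1 - r²))`.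
The hypothesis `η₁ < ψ(r₀) < η₂` says `g(r₀) < 0`, and at a zero of `g` we have `ψ' = 0` and
`(1 - r²) g' = -(n - 1) ψ (1 - r R) > 0`, so `g` cannot reach `0` when moving left from `r₀`.
Hence `g ≤ 0` on `(-1, r₀]`: `ψ` is nondecreasing and negative there. If `ψ` were bounded below,
then `√(1 - r²) → 0` would make `-g ≥ c > 0` near `-1`, so `ψ' ≥ c' / (r + 1)` and `ψ` would
tend to `-∞` like `c' log (r + 1)`, a contradiction; a monotone function unbounded below on
`(-1, r₀]` tends to `-∞` at `-1`.
-/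
noncomputable def Bq (n : ℕ) (R r : ℝ) : ℝ :=
  (((n : ℝ) - 1) ^ 2 + 4) * r ^ 2 - 2 * ((n : ℝ) - 1) ^ 2 * R * r + ((n : ℝ) - 1) ^ 2 * R ^ 2 - 4

noncomputable def rootA (n : ℕ) (R : ℝ) : ℝ :=
  (((n : ℝ) - 1) ^ 2 * R - 2 * Real.sqrt (((n : ℝ) - 1) ^ 2 * (1 - R ^ 2) + 4)) / (((n : ℝ) - 1) ^ 2 + 4)

noncomputable def rootB (n : ℕ) (R : ℝ) : ℝ :=
  (((n : ℝ) - 1) ^ 2 * R + 2 * Real.sqrt (((n : ℝ) - 1) ^ 2 * (1 - R ^ 2) + 4)) / (((n : ℝ) - 1) ^ 2 + 4)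

noncomputable def Aq (n : ℕ) (R x r : ℝ) : ℝ :=
  Real.sqrt (1 - r ^ 2) * x ^ 2 - ((n : ℝ) - 1) * (r - R) * x + Real.sqrt (1 - r ^ 2)

noncomputable def eta1 (n : ℕ) (R r : ℝ) : ℝ :=
  (((n : ℝ) - 1) * (r - R) - Real.sqrt (Bq n R r)) / (2 * Real.sqrt (1 - r ^ 2))

noncomputable def eta2 (n : ℕ) (R r : ℝ) : ℝ :=
  (((n : ℝ) - 1) * (r - R) + Real.sqrt (Bq n R r)) / (2 * Real.sqrt (1 - r ^ 2))

noncomputable def Phi (n k : ℕ) (R r p : ℝ) : ℝ :=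
  -(1 / ((k : ℝ) * (1 - r ^ 2))) * (p ^ 2 + 1) *
    (Real.sqrt (1 - r ^ 2) * p ^ 2 - ((n : ℝ) - 1) * (r - R) * p + Real.sqrt (1 - r ^ 2))

open Set Filter Topology

theorem monotoneOn_Ioc_of_hasDerivAt_nonneg {f f' : ℝ → ℝ} {a b : ℝ}
    (hf : ∀ x ∈ Ioc a b, HasDerivAt f (f' x) x) (hf' : ∀ x ∈ Ioc a b, 0 ≤ f' x) :
    MonotoneOn f (Ioc a b) := by
  refine monotoneOn_of_hasDerivWithinAt_nonneg (f' := f') (convex_Ioc a b)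
    (fun x hx => (hf x hx).continuousAt.continuousWithinAt) (fun x hx => ?_) (fun x hx => ?_)
  all_goals rw [interior_Ioc] at hx
  · exact (hf x (Ioo_subset_Ioc_self hx)).hasDerivWithinAt
  · exact hf' x (Ioo_subset_Ioc_self hx)

theorem MonotoneOn.tendsto_nhdsGT_atBot {f : ℝ → ℝ} {a b : ℝ} (hf : MonotoneOn f (Ioc a b))
    (hunbdd : ¬BddBelow (f '' Ioc a b)) : Tendsto f (𝓝[>] a) atBot := by
  refine tendsto_atBot.2 fun M => ?_
  obtain ⟨_, ⟨y, hy, rfl⟩, hyM⟩ := not_bddBelow_iff.1 hunbdd M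
  filter_upwards [Ioo_mem_nhdsGT hy.1] with x hx
  exact (hf ⟨hx.1, hx.2.le.trans hy.2⟩ hy hx.2.le).trans hyM.le

/-- Comparison with `c * log (x - a)`. -/
theorem tendsto_atBot_of_div_sub_le_deriv {f f' : ℝ → ℝ} {a c : ℝ} (hc : 0 < c)
    (hf : ∀ᶠ x in 𝓝[>] a, HasDerivAt f (f' x) x ∧ c / (x - a) ≤ f' x) :
    Tendsto f (𝓝[>] a) atBot := by
  obtain ⟨b, hab : a < b, hb⟩ := mem_nhdsGT_iff_exists_Ioo_subset.1 hf
  have hsub : Ioc a ((a + b) / 2) ⊆ Ioo a b := fun x hx => ⟨hx.1, by linarith [hx.2]⟩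
  have hmid : (a + b) / 2 ∈ Ioc a ((a + b) / 2) := ⟨by linarith, le_rfl⟩
  set F : ℝ → ℝ := fun x => f x - c * Real.log (x - a)
  have hF : MonotoneOn F (Ioc a ((a + b) / 2)) := by
    refine monotoneOn_Ioc_of_hasDerivAt_nonneg (f' := fun x => f' x - c * (1 / (x - a)))
      (fun x hx => ?_) (fun x hx => ?_)
    · have hxa : x - a ≠ 0 := sub_ne_zero.2 hx.1.ne'
      exact (hb (hsub hx)).1.sub ((((hasDerivAt_id x).sub_const a).log hxa).const_mul c)
    · simpa [div_eq_mul_inv] using (hb (hsub hx)).2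
  have hlog : Tendsto (fun x => F ((a + b) / 2) + c * Real.log (x - a)) (𝓝[>] a) atBot := by
    have hsub0 : Tendsto (fun x => x - a) (𝓝[>] a) (𝓝[>] 0) := by
      refine tendsto_nhdsWithin_iff.2
        ⟨?_, eventually_nhdsWithin_of_forall fun x hx => mem_Ioi.2 (sub_pos.2 hx)⟩
      simpa using tendsto_nhdsWithin_of_tendsto_nhds ((continuous_sub_right a).tendsto a)
    exact tendsto_atBot_add_const_left _ _
      ((Real.tendsto_log_nhdsGT_zero.comp hsub0).const_mul_atBot hc)
  refine tendsto_atBot_mono' _ ?_ hlog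
  filter_upwards [Ioc_mem_nhdsGT hmid.1] with x hx
  have := hF hx hmid hx.2
  simp only [F] at this
  linarith

theorem nonpos_of_hasDerivAt_of_deriv_pos_of_eq_zero {g g' : ℝ → ℝ} {a b x : ℝ}
    (hg : ∀ y ∈ Ioc a b, HasDerivAt g (g' y) y) (hb : g b ≤ 0)
    (hzero : ∀ y ∈ Ioc a b, g y = 0 → 0 < g' y) (hx : x ∈ Ioc a b) : g x ≤ 0 := by
  have hneg : ∀ t ∈ Icc (-b) (-x), -t ∈ Ioc a b := fun t ht =>
    ⟨by linarith [hx.1, ht.2], by linarith [ht.1]⟩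
  have hderiv : ∀ t ∈ Icc (-b) (-x), HasDerivAt (fun t => g (-t)) (-g' (-t)) t := fun t ht =>
    ((hg _ (hneg t ht)).comp t (hasDerivAt_neg t)).congr_deriv (by ring)
  simpa using image_le_of_deriv_right_lt_deriv_boundary (f := fun t => g (-t)) (B := 0) (B' := 0)
    (fun t ht => (hderiv t ht).continuousAt.continuousWithinAt)
    (fun t ht => (hderiv t (Ico_subset_Icc_self ht)).hasDerivWithinAt)
    (by simpa using hb) (fun _ => hasDerivAt_const _ _)
    (fun t ht h0 => by simpa using hzero _ (hneg t (Ico_subset_Icc_self ht)) h0)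
    (x := -x) ⟨by linarith [hx.2], le_rfl⟩

section

variable {n k : ℕ} {R r p : ℝ}

theorem Bq_eq : Bq n R r = ((n : ℝ) - 1) ^ 2 * (r - R) ^ 2 - 4 * (1 - r ^ 2) := by
  unfold Bq; ring

theorem Phi_eq : Phi n k R r p = (p ^ 2 + 1) * -Aq n R p r / (k * (1 - r ^ 2)) := by
  unfold Phi Aq; ring

theorem rootA_lt (hR1 : -1 < R) (hR2 : R < 1) : rootA n R < R := by
  have hR : 0 ≤ 1 - R ^ 2 := by nlinarith
  have hs : 2 ≤ √(((n : ℝ) - 1) ^ 2 * (1 - R ^ 2) + 4) :=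
    Real.le_sqrt_of_sq_le (by nlinarith [mul_nonneg (sq_nonneg ((n : ℝ) - 1)) hR])
  rw [rootA, div_lt_iff₀ (by positivity)]
  nlinarith

/-- No hypothesis `0 ≤ Bq` is needed: if `Bq < 0` then `√Bq = 0` and `eta1 = eta2`. -/
theorem Aq_neg_of_eta1_lt_of_lt_eta2 (hr : r ^ 2 < 1) (h1 : eta1 n R r < p)
    (h2 : p < eta2 n R r) : Aq n R p r < 0 := by
  have hs : 0 < √(1 - r ^ 2) := Real.sqrt_pos.2 (by linarith)
  rw [eta1, div_lt_iff₀ (by positivity)] at h1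
  rw [eta2, lt_div_iff₀ (by positivity)] at h2
  have hB : 0 < Bq n R r := Real.sqrt_pos.1 (by linarith)
  have hsq : √(Bq n R r) ^ 2 = ((n : ℝ) - 1) ^ 2 * (r - R) ^ 2 - 4 * (1 - r ^ 2) := by
    rw [Real.sq_sqrt hB.le, Bq_eq]
  have hs2 := Real.sq_sqrt (by linarith : (0 : ℝ) ≤ 1 - r ^ 2)
  set u := p * (2 * √(1 - r ^ 2)) - ((n : ℝ) - 1) * (r - R)
  have hroots : (√(Bq n R r) - u) * (√(Bq n R r) + u) = 4 * √(1 - r ^ 2) * -Aq n R p r := by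
    unfold Aq
    linear_combination hsq + 4 * hs2
  have := mul_pos (by linarith : 0 < √(Bq n R r) - u) (by linarith : 0 < √(Bq n R r) + u)
  rw [hroots] at this
  nlinarith

theorem neg_of_Aq_nonpos (hn : 1 < n) (hr : r ^ 2 < 1) (hrR : r < R) (hA : Aq n R p r ≤ 0) :
    p < 0 := by
  have hs : 0 < √(1 - r ^ 2) := Real.sqrt_pos.2 (by linarith)
  have hν : (0 : ℝ) < n - 1 := sub_pos.2 (by exact_mod_cast hn)
  unfold Aq at hA
  by_contra! hp
  nlinarith [mul_nonneg (mul_nonneg hν.le (sub_nonneg.2 hrR.le)) hp, sq_nonneg p]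

theorem Phi_nonneg (hr : r ^ 2 ≤ 1) (hA : Aq n R p r ≤ 0) : 0 ≤ Phi n k R r p := by
  rw [Phi_eq]
  exact div_nonneg (mul_nonneg (by positivity) (neg_nonneg.2 hA))
    (mul_nonneg (Nat.cast_nonneg k) (by linarith))

theorem div_le_Phi_of_Aq_le {c : ℝ} (hk : 0 < k) (hr1 : -1 < r) (hr2 : r < 1) (hc : 0 ≤ c)
    (hA : Aq n R p r ≤ -c) : c / (2 * k) / (r - -1) ≤ Phi n k R r p := by
  have hk' : (0 : ℝ) < k := by exact_mod_cast hk
  have hr : 0 < 1 - r ^ 2 := by nlinarith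
  have hr1' : 0 ≤ r + 1 := by linarith
  rw [Phi_eq, div_div]
  calc c / (2 * k * (r - -1)) ≤ c / (k * (1 - r ^ 2)) :=
        div_le_div_of_nonneg_left hc (by positivity)
          (by nlinarith [mul_nonneg (mul_nonneg hk'.le hr1') hr1'])
    _ ≤ (p ^ 2 + 1) * -Aq n R p r / (k * (1 - r ^ 2)) :=
        div_le_div_of_nonneg_right (by nlinarith [sq_nonneg p]) (by positivity)

theorem hasDerivAt_Aq_comp {ψ : ℝ → ℝ} {ψ' : ℝ} (hr : r ^ 2 < 1) (hψ : HasDerivAt ψ ψ' r) :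
    HasDerivAt (fun t => Aq n R (ψ t) t)
      (-r / √(1 - r ^ 2) * (ψ r ^ 2 + 1) - ((n : ℝ) - 1) * ψ r
        + (2 * √(1 - r ^ 2) * ψ r - ((n : ℝ) - 1) * (r - R)) * ψ') r := by
  have hs : HasDerivAt (fun t => √(1 - t ^ 2)) (-r / √(1 - r ^ 2)) r := by
    convert ((hasDerivAt_pow 2 r).const_sub 1).sqrt (by linarith) using 1
    norm_num
    ring
  have hlin : HasDerivAt (fun t => ((n : ℝ) - 1) * (t - R)) ((n : ℝ) - 1) r := by
    simpa using ((hasDerivAt_id r).sub_const R).const_mul ((n : ℝ) - 1)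
  exact (((hs.fun_mul (hψ.fun_pow 2)).fun_sub (hlin.fun_mul hψ)).fun_add hs).congr_deriv
    (by push_cast; ring)

theorem deriv_pos_of_Aq_eq_zero (hn : 1 < n) (hr : r ^ 2 < 1) (hrR : r < R) (hR : R < 1)
    (hA : Aq n R p r = 0) : 0 < -r / √(1 - r ^ 2) * (p ^ 2 + 1) - ((n : ℝ) - 1) * p := by
  have hp := neg_of_Aq_nonpos hn hr hrR hA.le
  have hs : 0 < √(1 - r ^ 2) := Real.sqrt_pos.2 (by linarith)
  have hs2 := Real.sq_sqrt (by linarith : (0 : ℝ) ≤ 1 - r ^ 2)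
  have hν : (0 : ℝ) < n - 1 := sub_pos.2 (by exact_mod_cast hn)
  have key : (1 - r ^ 2) * (-r / √(1 - r ^ 2) * (p ^ 2 + 1) - ((n : ℝ) - 1) * p)
      = -(((n : ℝ) - 1) * p * (1 - r * R)) := by
    have hdiv : (1 - r ^ 2) * (-r / √(1 - r ^ 2)) = -r * √(1 - r ^ 2) := by
      field_simp
      rw [hs2]
    unfold Aq at hA
    rw [mul_sub, ← mul_assoc, hdiv]
    linear_combination (-r) * hA
  refine pos_of_mul_pos_right (key ▸ ?_) (by linarith : (0 : ℝ) ≤ 1 - r ^ 2)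
  have : 0 < 1 - r * R := by nlinarith
  nlinarith [mul_pos hν (neg_pos.2 hp)]

end

section

variable {n k : ℕ} {R r₀ : ℝ} {ψ : ℝ → ℝ}

theorem Aq_comp_nonpos (hn : 1 < n) (hR : R < 1) (hr₀R : r₀ < R)
    (hode : ∀ r ∈ Ioc (-1 : ℝ) r₀, HasDerivAt ψ (Phi n k R r (ψ r)) r)
    (h₀ : Aq n R (ψ r₀) r₀ ≤ 0) {r : ℝ} (hr : r ∈ Ioc (-1 : ℝ) r₀) : Aq n R (ψ r) r ≤ 0 := by
  have hsq : ∀ r ∈ Ioc (-1 : ℝ) r₀, r ^ 2 < 1 := fun r hr => by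
    nlinarith [hr.1, hr.2.trans_lt (hr₀R.trans hR)]
  refine nonpos_of_hasDerivAt_of_deriv_pos_of_eq_zero (g := fun t => Aq n R (ψ t) t)
    (fun y hy => hasDerivAt_Aq_comp (hsq y hy) (hode y hy)) h₀ (fun y hy hy0 => ?_) hr
  rw [Phi_eq, hy0, neg_zero, mul_zero, zero_div, mul_zero, add_zero]
  exact deriv_pos_of_Aq_eq_zero hn (hsq y hy) (hy.2.trans_lt hr₀R) hR hy0

theorem not_bddBelow_image_of_hasDerivAt_Phi (hn : 1 < n) (hk : 0 < k) (hr₀ : -1 < r₀)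
    (hr₀R : r₀ < R) (hR : R < 1)
    (hode : ∀ r ∈ Ioc (-1 : ℝ) r₀, HasDerivAt ψ (Phi n k R r (ψ r)) r)
    (hmono : MonotoneOn ψ (Ioc (-1) r₀)) (hψ₀ : ψ r₀ < 0) : ¬BddBelow (ψ '' Ioc (-1) r₀) := by
  rintro ⟨M, hM⟩
  have hr₀mem : r₀ ∈ Ioc (-1) r₀ := ⟨hr₀, le_rfl⟩
  have hbounds : ∀ r ∈ Ioc (-1 : ℝ) r₀, M ≤ ψ r ∧ ψ r ≤ ψ r₀ := fun r hr =>
    ⟨hM (mem_image_of_mem ψ hr), hmono hr hr₀mem hr.2⟩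
  have hν : (0 : ℝ) < n - 1 := sub_pos.2 (by exact_mod_cast hn)
  set c := ((n : ℝ) - 1) * (R - r₀) * -ψ r₀
  have hc : 0 < c := mul_pos (mul_pos hν (sub_pos.2 hr₀R)) (neg_pos.2 hψ₀)
  have hsmall : ∀ᶠ r in 𝓝[>] (-1 : ℝ), √(1 - r ^ 2) * (M ^ 2 + 1) < c / 2 := by
    have : Tendsto (fun r : ℝ => √(1 - r ^ 2) * (M ^ 2 + 1)) (𝓝 (-1)) (𝓝 0) := by
      convert Continuous.tendsto (f := fun r : ℝ => √(1 - r ^ 2) * (M ^ 2 + 1))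
        (by fun_prop) (-1) using 2
      norm_num
    exact nhdsWithin_le_nhds (this.eventually_lt_const (half_pos hc))
  have hderiv : ∀ᶠ r in 𝓝[>] (-1 : ℝ), HasDerivAt ψ (Phi n k R r (ψ r)) r ∧
      c / 2 / (2 * k) / (r - -1) ≤ Phi n k R r (ψ r) := by
    filter_upwards [Ioc_mem_nhdsGT hr₀, hsmall] with r hr hs
    refine ⟨hode r hr, div_le_Phi_of_Aq_le hk hr.1 (by linarith [hr.2]) (by positivity) ?_⟩
    obtain ⟨hMr, hr₀r⟩ := hbounds r hr
    have hsq : ψ r ^ 2 ≤ M ^ 2 := by nlinarith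
    have hlin : c ≤ ((n : ℝ) - 1) * (R - r) * -ψ r :=
      calc c ≤ ((n : ℝ) - 1) * (R - r) * -ψ r₀ := mul_le_mul_of_nonneg_right
            (mul_le_mul_of_nonneg_left (sub_le_sub_left hr.2 R) hν.le) (by linarith)
        _ ≤ ((n : ℝ) - 1) * (R - r) * -ψ r := mul_le_mul_of_nonneg_left (by linarith)
            (mul_nonneg hν.le (by linarith [hr.2]))
    have hs0 : 0 ≤ √(1 - r ^ 2) := Real.sqrt_nonneg _
    unfold Aq
    nlinarith [mul_le_mul_of_nonneg_left hsq hs0]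
  have hdiverge := tendsto_atBot_of_div_sub_le_deriv (by positivity) hderiv
  obtain ⟨r, hlt, hr⟩ :=
    ((hdiverge.eventually (eventually_lt_atBot M)).and (Ioc_mem_nhdsGT hr₀)).exists
  exact hlt.not_ge (hbounds r hr).1

end

theorem stmt_9 (n k : ℕ) (hn : 2 ≤ n) (hk : 1 ≤ k) (R : ℝ) (hR1 : -1 < R) (hR2 : R < 1)
    (r₀ : ℝ) (hr₀ : r₀ ∈ Set.Ioo (-1 : ℝ) (rootA n R)) (ψ : ℝ → ℝ)
    (hode : ∀ r ∈ Set.Ioc (-1 : ℝ) r₀, HasDerivAt ψ (Phi n k R r (ψ r)) r)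
    (h1 : eta1 n R r₀ < ψ r₀) (h2 : ψ r₀ < eta2 n R r₀) :
    Filter.Tendsto ψ (nhdsWithin (-1) (Set.Ioi (-1))) Filter.atBot := by
  have hr₀R : r₀ < R := hr₀.2.trans (rootA_lt hR1 hR2)
  have hsq : ∀ r ∈ Ioc (-1 : ℝ) r₀, r ^ 2 < 1 := fun r hr => by
    nlinarith [hr.1, hr.2.trans_lt (hr₀R.trans hR2)]
  have hr₀mem : r₀ ∈ Ioc (-1) r₀ := ⟨hr₀.1, le_rfl⟩
  have hA : ∀ r ∈ Ioc (-1 : ℝ) r₀, Aq n R (ψ r) r ≤ 0 := fun r hr =>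
    Aq_comp_nonpos hn hR2 hr₀R hode (Aq_neg_of_eta1_lt_of_lt_eta2 (hsq r₀ hr₀mem) h1 h2).le hr
  have hmono : MonotoneOn ψ (Ioc (-1) r₀) :=
    monotoneOn_Ioc_of_hasDerivAt_nonneg hode fun r hr => Phi_nonneg (hsq r hr).le (hA r hr)
  have hψ₀ : ψ r₀ < 0 := neg_of_Aq_nonpos hn (hsq r₀ hr₀mem) hr₀R (hA r₀ hr₀mem)
  exact hmono.tendsto_nhdsGT_atBot
    (not_bddBelow_image_of_hasDerivAt_Phi hn hk hr₀.1 hr₀R hR2 hode hmono hψ₀)
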